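/- arXiv:cond-mat/0101200 — 2 statements merged into one kernel-verified Lean document; each statement's English description precedes it below -/
import Mathlib

section
/- Fix n ≥ 1 and weights w : {1,…,n} × {1,…,n} → ℝ with w(i,j) ≥ 0, satisfying the anti-diagonal reflection symmetry w(i,j) = w(n+1−j, n+1−i) for all i,j, and w(i,j) = 0 whenever i + j = n + 1. Let G(n,n) be the maximum of Σ_{(i,j) ∈ ω} w(i,j) over all up/right paths ω from (1,1) to (n,n) inside {1,…,n}², and let the point-to-line last passage time G^pl(n) be the maximum of Σ_{(i,j) ∈ ω} w(i,j) over all up/right paths ω contained in the upper triangle Δ_n = {(i,j) : 1 ≤ i,j ≤ n, i + j ≥ n + 1} which start at some site of the anti-diagonal {(i,j) : i + j = n + 1} and end at (n,n). Then G(n,n) = 2·G^pl(n). -/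
/-- An up/right path `ω` of length `L` from `(a,b)` to `(m,n)`. -/
def IsUpRightPath (ω : ℕ → ℕ × ℕ) (L : ℕ) (a b m n : ℕ) : Prop :=
  ω 0 = (a, b) ∧ ω L = (m, n) ∧
    ∀ i < L, ω (i + 1) = ((ω i).1 + 1, (ω i).2) ∨ ω (i + 1) = ((ω i).1, (ω i).2 + 1)

/-- The passage time of a path: the sum of the weights of the sites it visits. -/
def pathTime (w : ℕ × ℕ → ℝ) (ω : ℕ → ℕ × ℕ) (L : ℕ) : ℝ :=
  ∑ i ∈ Finset.range (L + 1), w (ω i)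

/-- Passage times of up/right paths from `(1,1)` to `(n,n)` inside the square
`{1,…,n}²` (such a path has `2(n-1)` steps and stays in the square automatically,
which we record explicitly). -/
def pointToPointTimes (w : ℕ × ℕ → ℝ) (n : ℕ) : Set ℝ :=
  {T | ∃ ω : ℕ → ℕ × ℕ, IsUpRightPath ω (2 * (n - 1)) 1 1 n n ∧
    (∀ k ≤ 2 * (n - 1), 1 ≤ (ω k).1 ∧ (ω k).1 ≤ n ∧ 1 ≤ (ω k).2 ∧ (ω k).2 ≤ n) ∧
    T = pathTime w ω (2 * (n - 1))}

/-- Passage times of up/right paths contained in the upper triangle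
`Δ_n = {(i,j) : 1 ≤ i,j ≤ n, i + j ≥ n + 1}` which start at some site of the
anti-diagonal `{i + j = n + 1}` and end at `(n,n)` (such a path has `n - 1` steps). -/
def pointToLineTimes (w : ℕ × ℕ → ℝ) (n : ℕ) : Set ℝ :=
  {T | ∃ i : ℕ, 1 ≤ i ∧ i ≤ n ∧ ∃ ω : ℕ → ℕ × ℕ,
    IsUpRightPath ω (n - 1) i (n + 1 - i) n n ∧
    (∀ k ≤ n - 1, 1 ≤ (ω k).1 ∧ (ω k).1 ≤ n ∧ 1 ≤ (ω k).2 ∧ (ω k).2 ≤ n ∧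
      n + 1 ≤ (ω k).1 + (ω k).2) ∧
    T = pathTime w ω (n - 1)}

lemma upRight_sum {ω : ℕ → ℕ × ℕ} {L a b m n : ℕ} (h : IsUpRightPath ω L a b m n) :
    ∀ k ≤ L, (ω k).1 + (ω k).2 = a + b + k := by
  intro k hk
  induction k with
  | zero => simp [h.1]
  | succ k ih =>
    have hk' : k < L := Nat.lt_of_succ_le hk
    have := ih hk'.le
    rcases h.2.2 k hk' with h' | h' <;> rw [h'] <;> simp <;> omega

lemma reflect_path {n : ℕ} {ω : ℕ → ℕ × ℕ} {L a b c d : ℕ}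
    (h : IsUpRightPath ω L a b c d)
    (hb : ∀ k ≤ L, (ω k).1 ≤ n ∧ (ω k).2 ≤ n) :
    IsUpRightPath (fun k => (n + 1 - (ω (L - k)).2, n + 1 - (ω (L - k)).1)) L
      (n + 1 - d) (n + 1 - c) (n + 1 - b) (n + 1 - a) := by
  refine ⟨by simp [h.2.1], by simp [h.1], ?_⟩
  intro k hk
  have hm : L - (k + 1) < L := by omega
  have h1 : L - k = (L - (k + 1)) + 1 := by omega
  have hb1 := hb (L - (k + 1)) (by omega)
  have hb2 := hb (L - k) (by omega)
  rcases h.2.2 (L - (k + 1)) hm with h' | h' <;>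
    [right; left] <;> simp only [h1, h', Prod.ext_iff] <;> simp <;> omega

/-- For weights symmetric with respect to reflection at the anti-diagonal and vanishing
on the anti-diagonal, the point-to-point last passage time `G(n,n)` equals twice the
point-to-line last passage time `G^pl(n)`. -/
theorem pointToPoint_eq_two_mul_pointToLine (n : ℕ) (hn : 1 ≤ n)
    (w : ℕ × ℕ → ℝ)
    (hw : ∀ i j : ℕ, 1 ≤ i → i ≤ n → 1 ≤ j → j ≤ n → 0 ≤ w (i, j))
    (hsymm : ∀ i j : ℕ, 1 ≤ i → i ≤ n → 1 ≤ j → j ≤ n →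
      w (i, j) = w (n + 1 - j, n + 1 - i))
    (hdiag : ∀ i j : ℕ, 1 ≤ i → i ≤ n → 1 ≤ j → j ≤ n → i + j = n + 1 → w (i, j) = 0)
    (Gpp Gpl : ℝ)
    (hGpp : IsGreatest (pointToPointTimes w n) Gpp)
    (hGpl : IsGreatest (pointToLineTimes w n) Gpl) :
    Gpp = 2 * Gpl := by
  have hwrefl : ∀ p : ℕ × ℕ, 1 ≤ p.1 → p.1 ≤ n → 1 ≤ p.2 → p.2 ≤ n →
      w (n + 1 - p.2, n + 1 - p.1) = w p := by
    rintro ⟨a, b⟩ h1 h2 h3 h4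
    exact (hsymm a b h1 h2 h3 h4).symm
  -- Direction 1 : 2 * Gpl ≤ Gpp
  have dir1 : 2 * Gpl ≤ Gpp := by
    obtain ⟨i, hi1, hin, ω, hpath, hbnd, hT⟩ := hGpl.1
    set ρ : ℕ → ℕ × ℕ := fun k => (n + 1 - (ω (n - 1 - k)).2, n + 1 - (ω (n - 1 - k)).1)
      with hρdef
    have hρ0 : IsUpRightPath ρ (n - 1) (n + 1 - n) (n + 1 - n) (n + 1 - (n + 1 - i))
        (n + 1 - i) := by
      have := reflect_path (n := n) hpath (fun k hk => ⟨(hbnd k hk).2.1, (hbnd k hk).2.2.2.1⟩)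
      convert this using 2 <;> omega
    have e1 : n + 1 - n = 1 := by omega
    have e2 : n + 1 - (n + 1 - i) = i := by omega
    rw [e1, e2] at hρ0
    have hρend : ρ (n - 1) = ω 0 := by rw [hρ0.2.1, hpath.1]
    set σ : ℕ → ℕ × ℕ := fun k => if k < n - 1 then ρ k else ω (k - (n - 1)) with hσdef
    have hσρ : ∀ k ≤ n - 1, σ k = ρ k := by
      intro k hk
      rcases lt_or_eq_of_le hk with h | h
      · simp [hσdef, h]
      · subst h; simp [hσdef, hρend, hpath.1]
    have hσω : ∀ k, n - 1 ≤ k → σ k = ω (k - (n - 1)) := by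
      intro k hk
      rcases lt_or_eq_of_le hk with h | h
      · simp [hσdef, Nat.not_lt.mpr hk]
      · subst h; simp [hσdef, hpath.1, hρend]
    have hσ : IsUpRightPath σ (2 * (n - 1)) 1 1 n n := by
      refine ⟨?_, ?_, ?_⟩
      · rw [hσρ 0 (by omega), hρ0.1]
      · rw [hσω (2 * (n - 1)) (by omega)]
        have : 2 * (n - 1) - (n - 1) = n - 1 := by omega
        rw [this, hpath.2.1]
      · intro k hk
        by_cases hk1 : k + 1 ≤ n - 1
        · rw [hσρ (k + 1) hk1, hσρ k (by omega)]
          exact hρ0.2.2 k (by omega)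
        · rw [hσω (k + 1) (by omega), hσω k (by omega)]
          have e3 : k + 1 - (n - 1) = (k - (n - 1)) + 1 := by omega
          rw [e3]
          exact hpath.2.2 (k - (n - 1)) (by omega)
    have hσbnd : ∀ k ≤ 2 * (n - 1), 1 ≤ (σ k).1 ∧ (σ k).1 ≤ n ∧ 1 ≤ (σ k).2 ∧ (σ k).2 ≤ n := by
      intro k hk
      by_cases hk1 : k ≤ n - 1
      · rw [hσρ k hk1]
        have := hbnd (n - 1 - k) (by omega)
        simp only [hρdef]
        omega
      · rw [hσω k (by omega)]
        have := hbnd (k - (n - 1)) (by omega)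
        omega
    have hw0 : w (ω 0) = 0 := by
      rw [hpath.1]
      exact hdiag i (n + 1 - i) hi1 hin (by omega) (by omega) (by omega)
    have hσtime : pathTime w σ (2 * (n - 1)) = 2 * Gpl := by
      have hsplit : 2 * (n - 1) + 1 = (n - 1) + n := by omega
      rw [pathTime, hsplit, Finset.sum_range_add]
      have h1 : ∑ k ∈ Finset.range (n - 1), w (σ k)
          = ∑ k ∈ Finset.range (n - 1), w (ω (k + 1)) := by
        rw [← Finset.sum_range_reflect (fun j => w (ω (j + 1))) (n - 1)]
        refine Finset.sum_congr rfl fun k hk => ?_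
        rw [Finset.mem_range] at hk
        rw [hσρ k (by omega)]
        have e4 : n - 1 - 1 - k + 1 = n - 1 - k := by omega
        rw [e4]
        have hb := hbnd (n - 1 - k) (by omega)
        exact hwrefl _ hb.1 hb.2.1 hb.2.2.1 hb.2.2.2.1
      have h2 : ∑ k ∈ Finset.range n, w (σ (n - 1 + k))
          = ∑ k ∈ Finset.range n, w (ω k) := by
        refine Finset.sum_congr rfl fun k hk => ?_
        rw [hσω (n - 1 + k) (by omega)]
        have e5 : n - 1 + k - (n - 1) = k := by omega
        rw [e5]
      have hTω : pathTime w ω (n - 1) = ∑ k ∈ Finset.range (n - 1), w (ω (k + 1)) := by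
        rw [pathTime, Finset.sum_range_succ', hw0, add_zero]
      have hTω2 : pathTime w ω (n - 1) = ∑ k ∈ Finset.range n, w (ω k) := by
        rw [pathTime]
        have e6 : n - 1 + 1 = n := by omega
        rw [e6]
      rw [h1, h2, ← hTω, ← hTω2, hT]
      ring
    have : (2 : ℝ) * Gpl ∈ pointToPointTimes w n := ⟨σ, hσ, hσbnd, hσtime.symm⟩
    exact hGpp.2 this
  -- Direction 2 : Gpp ≤ 2 * Gpl
  have dir2 : Gpp ≤ 2 * Gpl := by
    obtain ⟨ω, hpath, hbnd, hT⟩ := hGpp.1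
    have hsum : ∀ k ≤ 2 * (n - 1), (ω k).1 + (ω k).2 = 2 + k := upRight_sum hpath
    set i := (ω (n - 1)).1 with hidef
    have hbmid := hbnd (n - 1) (by omega)
    have hsmid := hsum (n - 1) (by omega)
    have hi1 : 1 ≤ i := hbmid.1
    have hin : i ≤ n := by omega
    have hωmid : ω (n - 1) = (i, n + 1 - i) := Prod.ext rfl (by simp; omega)
    -- second half
    set ω₂ : ℕ → ℕ × ℕ := fun k => ω (n - 1 + k) with hω₂def
    have hpath₂ : IsUpRightPath ω₂ (n - 1) i (n + 1 - i) n n := by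
      refine ⟨by simpa [hω₂def] using hωmid, ?_, ?_⟩
      · have e : n - 1 + (n - 1) = 2 * (n - 1) := by omega
        simp only [hω₂def, e, hpath.2.1]
      · intro k hk
        have e : n - 1 + (k + 1) = (n - 1 + k) + 1 := by omega
        simp only [hω₂def, e]
        exact hpath.2.2 (n - 1 + k) (by omega)
    have hbnd₂ : ∀ k ≤ n - 1, 1 ≤ (ω₂ k).1 ∧ (ω₂ k).1 ≤ n ∧ 1 ≤ (ω₂ k).2 ∧ (ω₂ k).2 ≤ n ∧
        n + 1 ≤ (ω₂ k).1 + (ω₂ k).2 := by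
      intro k hk
      have h1 := hbnd (n - 1 + k) (by omega)
      have h2 := hsum (n - 1 + k) (by omega)
      simp only [hω₂def]
      omega
    have hmem₂ : pathTime w ω₂ (n - 1) ∈ pointToLineTimes w n :=
      ⟨i, hi1, hin, ω₂, hpath₂, hbnd₂, rfl⟩
    -- first half, reflected
    have hpathA : IsUpRightPath ω (n - 1) 1 1 i (n + 1 - i) :=
      ⟨hpath.1, hωmid, fun k hk => hpath.2.2 k (by omega)⟩
    set ρ : ℕ → ℕ × ℕ :=
      fun k => (n + 1 - (ω (n - 1 - k)).2, n + 1 - (ω (n - 1 - k)).1) with hρdef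
    have hρ0 : IsUpRightPath ρ (n - 1) (n + 1 - (n + 1 - i)) (n + 1 - i) (n + 1 - 1)
        (n + 1 - 1) := by
      exact reflect_path (n := n) hpathA
        (fun k hk => ⟨(hbnd k (by omega)).2.1, (hbnd k (by omega)).2.2.2⟩)
    have e1 : n + 1 - (n + 1 - i) = i := by omega
    have e2 : n + 1 - 1 = n := by omega
    rw [e1, e2] at hρ0
    have hbndρ : ∀ k ≤ n - 1, 1 ≤ (ρ k).1 ∧ (ρ k).1 ≤ n ∧ 1 ≤ (ρ k).2 ∧ (ρ k).2 ≤ n ∧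
        n + 1 ≤ (ρ k).1 + (ρ k).2 := by
      intro k hk
      have h1 := hbnd (n - 1 - k) (by omega)
      have h2 := hsum (n - 1 - k) (by omega)
      simp only [hρdef]
      omega
    have hmemρ : pathTime w ρ (n - 1) ∈ pointToLineTimes w n :=
      ⟨i, hi1, hin, ρ, hρ0, hbndρ, rfl⟩
    -- compute Gpp = T₁ + T₂
    have hw0 : w (ω (n - 1)) = 0 := by
      rw [hωmid]
      exact hdiag i (n + 1 - i) hi1 hin (by omega) (by omega) (by omega)
    have hT1 : pathTime w ρ (n - 1) = ∑ k ∈ Finset.range n, w (ω k) := by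
      rw [pathTime]
      have en : n - 1 + 1 = n := by omega
      rw [en, ← Finset.sum_range_reflect (fun j => w (ω j)) n]
      refine Finset.sum_congr rfl fun k hk => ?_
      rw [Finset.mem_range] at hk
      simp only [hρdef]
      have hb := hbnd (n - 1 - k) (by omega)
      exact hwrefl _ hb.1 hb.2.1 hb.2.2.1 hb.2.2.2
    have hT2 : pathTime w ω₂ (n - 1) = ∑ k ∈ Finset.range (n - 1), w (ω (n + k)) := by
      rw [pathTime, Finset.sum_range_succ']
      have e0 : ω₂ 0 = ω (n - 1) := by simp [hω₂def]
      rw [e0, hw0, add_zero]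
      refine Finset.sum_congr rfl fun k hk => ?_
      rw [Finset.mem_range] at hk
      have e7 : n - 1 + (k + 1) = n + k := by omega
      simp only [hω₂def, e7]
    have hGsplit : Gpp = pathTime w ρ (n - 1) + pathTime w ω₂ (n - 1) := by
      rw [hT, pathTime, hT1, hT2]
      have hsplit : 2 * (n - 1) + 1 = n + (n - 1) := by omega
      rw [hsplit, Finset.sum_range_add]
    have l1 : pathTime w ρ (n - 1) ≤ Gpl := hGpl.2 hmemρ
    have l2 : pathTime w ω₂ (n - 1) ≤ Gpl := hGpl.2 hmem₂
    linarith [hGsplit]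
  linarith
end

section
/- Fix n ≥ 1 and weights w : {1,…,n} × {1,…,n} → ℝ with w(i,j) ≥ 0, satisfying the diagonal reflection symmetry w(i,j) = w(j,i) for all i,j. Then the maximum of Σ_{(i,j) ∈ ω} w(i,j) over all up/right paths ω from (1,1) to (n,n) inside {1,…,n}² equals the maximum of Σ_{(i,j) ∈ ω} w(i,j) over only those up/right paths from (1,1) to (n,n) which stay weakly below the diagonal, i.e. all of whose sites (i,j) satisfy j ≤ i. -/
/-- Passage times of up/right paths from `(1,1)` to `(n,n)` inside `{1,…,n}²`. -/
def squareTimes (w : ℕ × ℕ → ℝ) (n : ℕ) : Set ℝ :=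
  {T | ∃ ω : ℕ → ℕ × ℕ, IsUpRightPath ω (2 * (n - 1)) 1 1 n n ∧
    (∀ k ≤ 2 * (n - 1), 1 ≤ (ω k).1 ∧ (ω k).1 ≤ n ∧ 1 ≤ (ω k).2 ∧ (ω k).2 ≤ n) ∧
    T = pathTime w ω (2 * (n - 1))}

/-- Passage times of up/right paths from `(1,1)` to `(n,n)` inside `{1,…,n}²` which
stay weakly below the diagonal: all sites `(i,j)` satisfy `j ≤ i`. -/
def belowDiagTimes (w : ℕ × ℕ → ℝ) (n : ℕ) : Set ℝ :=
  {T | ∃ ω : ℕ → ℕ × ℕ, IsUpRightPath ω (2 * (n - 1)) 1 1 n n ∧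
    (∀ k ≤ 2 * (n - 1), 1 ≤ (ω k).1 ∧ (ω k).1 ≤ n ∧ 1 ≤ (ω k).2 ∧ (ω k).2 ≤ n ∧
      (ω k).2 ≤ (ω k).1) ∧
    T = pathTime w ω (2 * (n - 1))}

/-- For weights symmetric with respect to reflection at the diagonal, the last passage
time over all up/right paths from `(1,1)` to `(n,n)` equals the last passage time over
only those paths which stay weakly below the diagonal. -/
theorem lastPassage_diag_symm (n : ℕ) (hn : 1 ≤ n) (w : ℕ × ℕ → ℝ)
    (hw : ∀ i j : ℕ, 1 ≤ i → i ≤ n → 1 ≤ j → j ≤ n → 0 ≤ w (i, j))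
    (hsymm : ∀ i j : ℕ, 1 ≤ i → i ≤ n → 1 ≤ j → j ≤ n → w (i, j) = w (j, i))
    (Gall Gbelow : ℝ)
    (hGall : IsGreatest (squareTimes w n) Gall)
    (hGbelow : IsGreatest (belowDiagTimes w n) Gbelow) :
    Gall = Gbelow := by
  apply le_antisymm
  · -- Gall ≤ Gbelow : fold the optimal path below the diagonal.
    obtain ⟨ω, ⟨h0, hL, hstep⟩, hbd, hT⟩ := hGall.1
    set L := 2 * (n - 1) with hLdef
    set ω' : ℕ → ℕ × ℕ := fun k => (max (ω k).1 (ω k).2, min (ω k).1 (ω k).2) with hω'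
    have hpath : IsUpRightPath ω' L 1 1 n n := by
      refine ⟨?_, ?_, ?_⟩
      · simp [hω', h0]
      · simp [hω', hL]
      · intro i hi
        rcases hstep i hi with h | h
        · rcases lt_or_ge (ω i).1 (ω i).2 with hle | hle
          · right
            simp only [hω', h, Prod.mk.injEq]
            constructor <;> (simp only [Nat.max_def, Nat.min_def]; split_ifs <;> omega)
          · left
            simp only [hω', h, Prod.mk.injEq]
            constructor <;> (simp only [Nat.max_def, Nat.min_def]; split_ifs <;> omega)
        · rcases lt_or_ge (ω i).2 (ω i).1 with hle | hle
          · right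
            simp only [hω', h, Prod.mk.injEq]
            constructor <;> (simp only [Nat.max_def, Nat.min_def]; split_ifs <;> omega)
          · left
            simp only [hω', h, Prod.mk.injEq]
            constructor <;> (simp only [Nat.max_def, Nat.min_def]; split_ifs <;> omega)
    have hbd' : ∀ k ≤ L, 1 ≤ (ω' k).1 ∧ (ω' k).1 ≤ n ∧ 1 ≤ (ω' k).2 ∧ (ω' k).2 ≤ n ∧
        (ω' k).2 ≤ (ω' k).1 := by
      intro k hk
      obtain ⟨a1, a2, a3, a4⟩ := hbd k hk
      simp only [hω']
      refine ⟨?_, ?_, ?_, ?_, ?_⟩ <;> omega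
    have htime : pathTime w ω' L = pathTime w ω L := by
      unfold pathTime
      refine Finset.sum_congr rfl fun i hi => ?_
      have hi' : i ≤ L := by
        simp only [Finset.mem_range] at hi; omega
      obtain ⟨a1, a2, a3, a4⟩ := hbd i hi'
      rcases le_total (ω i).2 (ω i).1 with hle | hle
      · have : ω' i = ω i := by
          simp only [hω', Prod.ext_iff]
          constructor <;> simp <;> omega
        rw [this]
      · have : ω' i = ((ω i).2, (ω i).1) := by
          simp only [hω', Prod.ext_iff]
          constructor <;> simp <;> omega
        rw [this, hsymm _ _ a3 a4 a1 a2]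
    have : pathTime w ω' L ∈ belowDiagTimes w n := ⟨ω', hpath, hbd', rfl⟩
    have hle := hGbelow.2 this
    rw [htime] at hle
    rw [hT]
    exact hle
  · -- Gbelow ≤ Gall : below-diagonal paths are in particular paths in the square.
    obtain ⟨ω, hpath, hbd, hT⟩ := hGbelow.1
    refine hT ▸ hGall.2 ⟨ω, hpath, fun k hk => ?_, rfl⟩
    obtain ⟨a1, a2, a3, a4, _⟩ := hbd k hk
    exact ⟨a1, a2, a3, a4⟩
end
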